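/- arXiv:1508.02435 — 5 statements merged into one kernel-verified Lean document; each statement's English description precedes it below -/
import Mathlib

section
/- In a k-spacetree T, every point x ∈ [0,1)^d is contained in the half-open cell of exactly one leaf of T. -/
/-- Mesh width `h_ℓ = k^{-ℓ}`. -/
noncomputable def meshWidth (k ℓ : ℕ) : ℝ := ((k : ℝ) ^ ℓ)⁻¹

/-- Half-open level-`ℓ` cell `C_{ℓ,i}`. -/
def cell (k d ℓ : ℕ) (i : Fin d → ℤ) : Set (Fin d → ℝ) :=
  {x | ∀ j, (i j : ℝ) * meshWidth k ℓ ≤ x j ∧ x j < ((i j : ℝ) + 1) * meshWidth k ℓ}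

/-- An index is admissible for level `ℓ` if `0 ≤ i_j < k^ℓ` for all `j`. -/
def admissible (k d ℓ : ℕ) (i : Fin d → ℤ) : Prop :=
  ∀ j, 0 ≤ i j ∧ i j < (k : ℤ) ^ ℓ

/-- Index of the parent cell: `j ↦ ⌊i_j / k⌋`. -/
def parentIdx (k d : ℕ) (i : Fin d → ℤ) : Fin d → ℤ := fun j => Int.fdiv (i j) (k : ℤ)

/-- A `k`-spacetree: a finite set of (level, admissible index) pairs containing
the root, closed under the parent map, and fully refined. -/
def IsSpacetree (k d : ℕ) (T : Finset (ℕ × (Fin d → ℤ))) : Prop :=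
  (∀ p ∈ T, admissible k d p.1 p.2) ∧
  ((0, fun _ => (0 : ℤ)) ∈ T) ∧
  (∀ ℓ : ℕ, ∀ i : Fin d → ℤ, (ℓ + 1, i) ∈ T → (ℓ, parentIdx k d i) ∈ T) ∧
  (∀ ℓ : ℕ, ∀ i i' : Fin d → ℤ, (ℓ + 1, i) ∈ T → admissible k d (ℓ + 1) i' →
    (∀ j, Int.fdiv (i' j) (k : ℤ) = Int.fdiv (i j) (k : ℤ)) → (ℓ + 1, i') ∈ T)

/-- A cell of `T` is a leaf if no cell of `T` has it as parent. -/
def IsLeaf (k d : ℕ) (T : Finset (ℕ × (Fin d → ℤ))) (p : ℕ × (Fin d → ℤ)) : Prop :=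
  p ∈ T ∧ ¬ ∃ i' : Fin d → ℤ, (p.1 + 1, i') ∈ T ∧ parentIdx k d i' = p.2

/-- Every point of the half-open unit cube is contained in the half-open cell of
exactly one leaf of a `k`-spacetree. -/
theorem unique_leaf_contains (k d : ℕ) (hk : 2 ≤ k) (hd : 1 ≤ d)
    (T : Finset (ℕ × (Fin d → ℤ))) (hT : IsSpacetree k d T)
    (x : Fin d → ℝ) (hx : ∀ j, 0 ≤ x j ∧ x j < 1) :
    ∃! p : ℕ × (Fin d → ℤ), IsLeaf k d T p ∧ x ∈ cell k d p.1 p.2 := by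
  classical
  obtain ⟨hadmT, hroot, hpar, href⟩ := hT
  have hk0 : (0:ℝ) < (k:ℝ) := by positivity
  have hpow : ∀ ℓ : ℕ, (0:ℝ) < (k:ℝ) ^ ℓ := fun ℓ => pow_pos hk0 ℓ
  set I : ℕ → Fin d → ℤ := fun ℓ j => ⌊x j * (k:ℝ) ^ ℓ⌋ with hI
  -- membership characterization
  have hmem : ∀ ℓ (i : Fin d → ℤ), x ∈ cell k d ℓ i ↔ i = I ℓ := by
    intro ℓ i
    constructor
    · intro h
      funext j
      obtain ⟨h1, h2⟩ := h j
      rw [meshWidth, ← div_eq_mul_inv] at h1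
      rw [meshWidth, ← div_eq_mul_inv] at h2
      have h1' : (i j : ℝ) ≤ x j * (k:ℝ) ^ ℓ := (div_le_iff₀ (hpow ℓ)).mp h1
      have h2' : x j * (k:ℝ) ^ ℓ < (i j : ℝ) + 1 := (lt_div_iff₀ (hpow ℓ)).mp h2
      exact ((Int.floor_eq_iff).mpr ⟨h1', h2'⟩).symm
    · rintro rfl j
      constructor
      · rw [meshWidth, ← div_eq_mul_inv, div_le_iff₀ (hpow ℓ)]
        exact Int.floor_le _
      · rw [meshWidth, ← div_eq_mul_inv, lt_div_iff₀ (hpow ℓ)]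
        exact Int.lt_floor_add_one _
  have hXmem : ∀ ℓ, x ∈ cell k d ℓ (I ℓ) := fun ℓ => (hmem ℓ (I ℓ)).mpr rfl
  -- admissibility
  have hadm : ∀ ℓ, admissible k d ℓ (I ℓ) := by
    intro ℓ j
    constructor
    · apply Int.floor_nonneg.mpr
      exact mul_nonneg (hx j).1 (hpow ℓ).le
    · apply Int.floor_lt.mpr
      push_cast
      calc x j * (k:ℝ) ^ ℓ < 1 * (k:ℝ) ^ ℓ := by
            exact mul_lt_mul_of_pos_right (hx j).2 (hpow ℓ)
        _ = (k:ℝ) ^ ℓ := one_mul _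
  -- parent relation
  have hparent : ∀ ℓ, parentIdx k d (I (ℓ + 1)) = I ℓ := by
    intro ℓ
    funext j
    have hq1 : (I ℓ j : ℝ) * (k:ℝ) ≤ x j * (k:ℝ) ^ (ℓ + 1) := by
      have := Int.floor_le (x j * (k:ℝ) ^ ℓ)
      calc (I ℓ j : ℝ) * (k:ℝ) ≤ (x j * (k:ℝ) ^ ℓ) * (k:ℝ) :=
            mul_le_mul_of_nonneg_right this hk0.le
        _ = x j * (k:ℝ) ^ (ℓ + 1) := by ring
    have hq2 : x j * (k:ℝ) ^ (ℓ + 1) < ((I ℓ j : ℝ) + 1) * (k:ℝ) := by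
      have := Int.lt_floor_add_one (x j * (k:ℝ) ^ ℓ)
      calc x j * (k:ℝ) ^ (ℓ + 1) = (x j * (k:ℝ) ^ ℓ) * (k:ℝ) := by ring
        _ < ((I ℓ j : ℝ) + 1) * (k:ℝ) := mul_lt_mul_of_pos_right this hk0
    have hkz : (0:ℤ) < (k:ℤ) := by exact_mod_cast hk0
    have hm1 : I ℓ j * (k:ℤ) ≤ I (ℓ + 1) j := by
      apply Int.le_floor.mpr
      push_cast
      exact hq1
    have hm2 : I (ℓ + 1) j < (I ℓ j + 1) * (k:ℤ) := by
      apply Int.floor_lt.mpr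
      push_cast
      exact hq2
    have hnn : 0 ≤ I (ℓ + 1) j := ((hadm (ℓ + 1)) j).1
    show Int.fdiv (I (ℓ + 1) j) (k:ℤ) = I ℓ j
    rw [Int.fdiv_eq_ediv_of_nonneg _ hkz.le]
    have hle : I ℓ j ≤ I (ℓ + 1) j / (k:ℤ) := Int.le_ediv_iff_mul_le hkz |>.mpr hm1
    have hlt : I (ℓ + 1) j / (k:ℤ) < I ℓ j + 1 := Int.ediv_lt_iff_lt_mul hkz |>.mpr hm2
    omega
  -- ancestors are in T
  have hanc : ∀ m, (m, I m) ∈ T → ∀ n, n ≤ m → (n, I n) ∈ T := by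
    intro m
    induction m with
    | zero =>
      intro hm n hn
      have : n = 0 := Nat.le_zero.mp hn
      subst this
      exact hm
    | succ m ih =>
      intro hm n hn
      rcases Nat.eq_or_lt_of_le hn with h | h
      · subst h; exact hm
      · have : (m, I m) ∈ T := by
          have := hpar m (I (m + 1)) hm
          rwa [hparent m] at this
        exact ih this n (by omega)
  -- root index
  have hI0 : I 0 = fun _ => (0:ℤ) := by
    funext j
    simp only [hI, pow_zero, mul_one]
    exact Int.floor_eq_zero_iff.mpr ⟨(hx j).1, (hx j).2⟩
  have hT0 : (0, I 0) ∈ T := by rw [hI0]; exact hroot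
  -- maximal level
  set S : Finset ℕ := (T.filter fun p => p.2 = I p.1).image Prod.fst with hS
  have hSne : S.Nonempty := ⟨0, Finset.mem_image.mpr ⟨(0, I 0), Finset.mem_filter.mpr ⟨hT0, rfl⟩, rfl⟩⟩
  set L := S.max' hSne with hLdef
  have hLmem : (L, I L) ∈ T := by
    obtain ⟨p, hp, hp1⟩ := Finset.mem_image.mp (S.max'_mem hSne)
    obtain ⟨hpT, hp2⟩ := Finset.mem_filter.mp hp
    have : p = (L, I L) := by
      rcases p with ⟨a, b⟩
      simp only at hp1 hp2
      subst hp1; rw [hp2]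
    rwa [this] at hpT
  have hLmax : ∀ ℓ, (ℓ, I ℓ) ∈ T → ℓ ≤ L := by
    intro ℓ hℓ
    exact S.le_max' ℓ (Finset.mem_image.mpr ⟨(ℓ, I ℓ), Finset.mem_filter.mpr ⟨hℓ, rfl⟩, rfl⟩)
  -- the leaf
  refine ⟨(L, I L), ⟨⟨hLmem, ?_⟩, hXmem L⟩, ?_⟩
  · rintro ⟨i', hi'T, hi'p⟩
    have hadm' : admissible k d (L + 1) (I (L + 1)) := hadm (L + 1)
    have hfd : ∀ j, Int.fdiv (I (L + 1) j) (k:ℤ) = Int.fdiv (i' j) (k:ℤ) := by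
      intro j
      have h1 : Int.fdiv (I (L + 1) j) (k:ℤ) = I L j := congrFun (hparent L) j
      have h2 : Int.fdiv (i' j) (k:ℤ) = I L j := congrFun hi'p j
      rw [h1, h2]
    have : (L + 1, I (L + 1)) ∈ T := href L i' (I (L + 1)) hi'T hadm' hfd
    have := hLmax (L + 1) this
    omega
  · rintro ⟨ℓ, i⟩ ⟨⟨hmemT, hnoleaf⟩, hxc⟩
    have hi : i = I ℓ := (hmem ℓ i).mp hxc
    subst hi
    have hle : ℓ ≤ L := hLmax ℓ hmemT
    rcases Nat.eq_or_lt_of_le hle with h | h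
    · subst h; rfl
    · exfalso
      apply hnoleaf
      exact ⟨I (ℓ + 1), hanc L hLmem (ℓ + 1) (by omega), hparent ℓ⟩
end

section
/- Correctness of the particle-in-tree (PIT) lift-then-drop sort: let T be a k-spacetree, let (ℓ,i) ∈ T and let x ∈ [0,1)^d. Let (ℓ*, a) be the deepest ancestor of (ℓ,i) in T (possibly (ℓ,i) itself) whose half-open cell contains x. Then the unique leaf of T whose half-open cell contains x is a descendant of (ℓ*, a). Hence lifting a particle at position x from its cell to the deepest covering ancestor and then repeatedly dropping it into the unique child cell containing x assigns the particle to the unique leaf whose cell covers x. -/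
/-- Index of the level-`ℓ'` ancestor of the level-`ℓ` cell `i`: `j ↦ ⌊i_j / k^{ℓ-ℓ'}⌋`. -/
def ancestorIdx (k d ℓ ℓ' : ℕ) (i : Fin d → ℤ) : Fin d → ℤ :=
  fun j => Int.fdiv (i j) ((k : ℤ) ^ (ℓ - ℓ'))

lemma myEdivEdiv (a b c : ℤ) (hb : 0 < b) (hc : 0 < c) : a / b / c = a / (b * c) := by
  have hbc : 0 < b * c := mul_pos hb hc
  have h := Int.emod_add_mul_ediv a (b * c)
  set q := a / (b * c) with hq
  set r := a % (b * c) with hr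
  have hr0 : 0 ≤ r := Int.emod_nonneg a hbc.ne'
  have hrlt : r < b * c := Int.emod_lt_of_pos a hbc
  have h1 : a / b = r / b + c * q := by
    conv_lhs => rw [← h]
    rw [show r + b * c * q = r + b * (c * q) by ring, Int.add_mul_ediv_left r (c * q) hb.ne']
  have h2 : r / b < c := by
    rw [Int.ediv_lt_iff_lt_mul hb]; linarith [hrlt]
  have h3 : 0 ≤ r / b := Int.ediv_nonneg hr0 hb.le
  rw [h1, Int.add_mul_ediv_left _ q hc.ne', Int.ediv_eq_zero_of_lt h3 h2, zero_add]

lemma myFloorFdiv (y : ℝ) (m : ℤ) (hm : 0 < m) : Int.fdiv ⌊y * m⌋ m = ⌊y⌋ := by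
  have hmr : (0:ℝ) < (m:ℝ) := by exact_mod_cast hm
  rw [Int.fdiv_eq_ediv_of_nonneg _ hm.le]
  have h1 : ⌊y⌋ * m ≤ ⌊y * m⌋ := by
    rw [Int.le_floor]; push_cast
    exact mul_le_mul_of_nonneg_right (Int.floor_le y) hmr.le
  have h2 : ⌊y * m⌋ < (⌊y⌋ + 1) * m := by
    rw [Int.floor_lt]; push_cast
    exact mul_lt_mul_of_pos_right (Int.lt_floor_add_one y) hmr
  have h3 : ⌊y * m⌋ = (⌊y * m⌋ - ⌊y⌋ * m) + m * ⌊y⌋ := by ring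
  rw [h3, Int.add_mul_ediv_left _ _ hm.ne', Int.ediv_eq_zero_of_lt (by linarith) (by nlinarith),
    zero_add]

lemma myMemCellIff {k d ℓ : ℕ} (hk : 0 < k) (i : Fin d → ℤ) (x : Fin d → ℝ) :
    x ∈ cell k d ℓ i ↔ ∀ j, i j = ⌊x j * (k:ℝ) ^ ℓ⌋ := by
  have hK : (0:ℝ) < (k:ℝ) ^ ℓ := by positivity
  simp only [cell, meshWidth, Set.mem_setOf_eq]
  refine forall_congr' fun j => ?_
  rw [eq_comm, Int.floor_eq_iff]
  constructor
  · rintro ⟨h1, h2⟩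
    constructor
    · calc (i j : ℝ) = (i j) * ((k:ℝ)^ℓ)⁻¹ * (k:ℝ)^ℓ := by field_simp
        _ ≤ x j * (k:ℝ)^ℓ := mul_le_mul_of_nonneg_right h1 hK.le
    · calc x j * (k:ℝ)^ℓ < ((i j : ℝ) + 1) * ((k:ℝ)^ℓ)⁻¹ * (k:ℝ)^ℓ :=
          mul_lt_mul_of_pos_right h2 hK
        _ = (i j : ℝ) + 1 := by field_simp
  · rintro ⟨h1, h2⟩
    constructor
    · rw [mul_inv_le_iff₀ hK]; linarith [h1]
    · rw [lt_mul_inv_iff₀ hK]; linarith [h2]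

lemma myAncestorMem {k d : ℕ} (hk : 0 < k) {T : Finset (ℕ × (Fin d → ℤ))}
    (hT : IsSpacetree k d T) {ℓ : ℕ} {i : Fin d → ℤ} (h : (ℓ, i) ∈ T) :
    ∀ n, n ≤ ℓ → (ℓ - n, ancestorIdx k d ℓ (ℓ - n) i) ∈ T := by
  have hkZ : (0:ℤ) < (k:ℤ) := by exact_mod_cast hk
  intro n
  induction n with
  | zero =>
    intro _
    have : ancestorIdx k d ℓ ℓ i = i := by
      funext j; simp [ancestorIdx, Nat.sub_self]
    simpa [this]
  | succ n ih =>
    intro hn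
    have h1 := ih (by omega)
    have hstep : ℓ - n = (ℓ - (n+1)) + 1 := by omega
    rw [hstep] at h1
    have h2 := hT.2.2.1 _ _ h1
    have h3 : parentIdx k d (ancestorIdx k d ℓ (ℓ - n) i) = ancestorIdx k d ℓ (ℓ - (n+1)) i := by
      funext j
      have e1 : ℓ - (ℓ - n) = n := by omega
      have e2 : ℓ - (ℓ - (n+1)) = n + 1 := by omega
      simp only [parentIdx, ancestorIdx, e1, e2]
      rw [Int.fdiv_eq_ediv_of_nonneg _ (pow_pos hkZ n).le, Int.fdiv_eq_ediv_of_nonneg _ hkZ.le,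
        Int.fdiv_eq_ediv_of_nonneg _ (pow_pos hkZ (n+1)).le, myEdivEdiv _ _ _ (pow_pos hkZ n) hkZ,
        ← pow_succ]
    rw [← hstep] at h2
    rwa [h3] at h2

/-- Correctness of the PIT lift-then-drop sort: if `(ℓ*,a)` is the deepest
ancestor of `(ℓ,i) ∈ T` whose half-open cell contains `x ∈ [0,1)^d`, then the
unique leaf of `T` whose half-open cell contains `x` is a descendant of `(ℓ*,a)`. -/
theorem pit_lift_drop_correct (k d : ℕ) (hk : 2 ≤ k) (hd : 1 ≤ d)
    (T : Finset (ℕ × (Fin d → ℤ))) (hT : IsSpacetree k d T)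
    (ℓ : ℕ) (i : Fin d → ℤ) (hmem : (ℓ, i) ∈ T)
    (x : Fin d → ℝ) (hx : ∀ j, 0 ≤ x j ∧ x j < 1)
    (ℓstar : ℕ) (a : Fin d → ℤ)
    (hls : ℓstar ≤ ℓ) (ha : a = ancestorIdx k d ℓ ℓstar i)
    (hcov : x ∈ cell k d ℓstar a)
    (hdeep : ∀ ℓ' : ℕ, ℓ' ≤ ℓ →
      x ∈ cell k d ℓ' (ancestorIdx k d ℓ ℓ' i) → ℓ' ≤ ℓstar) :
    (∃! p : ℕ × (Fin d → ℤ), IsLeaf k d T p ∧ x ∈ cell k d p.1 p.2) ∧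
    (∀ p : ℕ × (Fin d → ℤ), IsLeaf k d T p → x ∈ cell k d p.1 p.2 →
      ℓstar ≤ p.1 ∧ ∀ j, Int.fdiv (p.2 j) ((k : ℤ) ^ (p.1 - ℓstar)) = a j) := by
  classical
  have hk0 : 0 < k := by omega
  have hkZ : (0:ℤ) < (k:ℤ) := by exact_mod_cast hk0
  obtain ⟨hadm, hroot, hparent, hrefine⟩ := hT
  set xI : ℕ → Fin d → ℤ := fun m j => ⌊x j * (k:ℝ) ^ m⌋ with hxI
  have hcellx : ∀ m, x ∈ cell k d m (xI m) := fun m => (myMemCellIff hk0 _ x).2 (fun j => rfl)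
  have hidx : ∀ (m : ℕ) (i' : Fin d → ℤ), x ∈ cell k d m i' → i' = xI m := by
    intro m i' h; funext j; exact (myMemCellIff hk0 _ x).1 h j
  have hadmx : ∀ m, admissible k d m (xI m) := by
    intro m j
    have hK : (0:ℝ) < (k:ℝ)^m := by positivity
    refine ⟨Int.floor_nonneg.2 (mul_nonneg (hx j).1 hK.le), ?_⟩
    rw [Int.floor_lt]; push_cast
    calc x j * (k:ℝ)^m < 1 * (k:ℝ)^m := mul_lt_mul_of_pos_right (hx j).2 hK
      _ = (k:ℝ)^m := one_mul _
  have hfdivx : ∀ m m' : ℕ, m' ≤ m → ∀ j, Int.fdiv (xI m j) ((k:ℤ)^(m-m')) = xI m' j := by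
    intro m m' hmm j
    have hcast : x j * (k:ℝ)^m = (x j * (k:ℝ)^m') * (((k:ℤ)^(m-m') : ℤ) : ℝ) := by
      push_cast
      rw [mul_assoc, ← pow_add]
      congr 2
      omega
    show Int.fdiv ⌊x j * (k:ℝ)^m⌋ _ = _
    rw [hcast, myFloorFdiv _ _ (pow_pos hkZ _)]
  have hparx : ∀ m : ℕ, parentIdx k d (xI (m+1)) = xI m := by
    intro m; funext j
    have h := hfdivx (m+1) m (Nat.le_succ m) j
    rw [Nat.add_sub_cancel_left (n := m) (m := 1)] at h
    · simpa [parentIdx, pow_one] using h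
  have hanc : ∀ (m m' : ℕ) (i' : Fin d → ℤ), m' ≤ m → (m, i') ∈ T →
      (m', ancestorIdx k d m m' i') ∈ T := by
    intro m m' i' hmm hmem'
    have h := myAncestorMem hk0 ⟨hadm, hroot, hparent, hrefine⟩ hmem' (m - m') (Nat.sub_le m m')
    rwa [Nat.sub_sub_self hmm] at h
  have hle : ∀ p : ℕ × (Fin d → ℤ), IsLeaf k d T p → x ∈ cell k d p.1 p.2 →
      ∀ q : ℕ × (Fin d → ℤ), q ∈ T → x ∈ cell k d q.1 q.2 → q.1 ≤ p.1 := by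
    rintro ⟨lp, ip⟩ ⟨hpT, hnl⟩ hpx ⟨lq, iq⟩ hqT hqx
    by_contra hlt
    push_neg at hlt
    have h1 : (lp + 1, ancestorIdx k d lq (lp+1) iq) ∈ T := hanc lq (lp+1) iq (by omega) hqT
    have h2 : ancestorIdx k d lq (lp+1) iq = xI (lp+1) := by
      funext j
      show Int.fdiv (iq j) _ = _
      rw [show iq = xI lq from hidx lq iq hqx]
      exact hfdivx lq (lp+1) (by omega) j
    exact hnl ⟨xI (lp+1), by rwa [h2] at h1, by rw [hparx lp, ← hidx lp ip hpx]⟩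
  have hroot0 : (fun _ : Fin d => (0:ℤ)) = xI 0 := by
    refine hidx 0 _ ?_
    rw [myMemCellIff hk0]
    intro j
    symm
    rw [pow_zero, mul_one, Int.floor_eq_zero_iff]
    exact ⟨(hx j).1, (hx j).2⟩
  have hrootmem : (0, xI 0) ∈ T := by rwa [← hroot0]
  have hexists : ∃ p : ℕ × (Fin d → ℤ), IsLeaf k d T p ∧ x ∈ cell k d p.1 p.2 := by
    set L := T.sup Prod.fst with hL
    have hbound : ∀ p ∈ T, p.1 ≤ L := fun p hp => Finset.le_sup (f := Prod.fst) hp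
    have key : ∀ n m : ℕ, L + 1 - m ≤ n → (m, xI m) ∈ T →
        ∃ p : ℕ × (Fin d → ℤ), IsLeaf k d T p ∧ x ∈ cell k d p.1 p.2 := by
      intro n
      induction n with
      | zero =>
        intro m hn hm
        have := hbound _ hm
        exact absurd hn (by simp only at this ⊢; omega)
      | succ n ih =>
        intro m hn hm
        by_cases hleaf : ∃ i', (m + 1, i') ∈ T ∧ parentIdx k d i' = xI m
        · obtain ⟨i', hi'T, hi'p⟩ := hleaf
          have hsame : ∀ j, Int.fdiv (xI (m+1) j) (k:ℤ) = Int.fdiv (i' j) (k:ℤ) :=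
            fun j => (congrFun (hparx m) j).trans (congrFun hi'p j).symm
          have hmem2 : (m + 1, xI (m+1)) ∈ T := hrefine m i' (xI (m+1)) hi'T (hadmx _) hsame
          exact ih (m+1) (by omega) hmem2
        · exact ⟨(m, xI m), ⟨hm, hleaf⟩, hcellx m⟩
    exact key (L + 1) 0 (by omega) hrootmem
  obtain ⟨p₀, hp₀leaf, hp₀x⟩ := hexists
  have hp₀T : p₀ ∈ T := hp₀leaf.1
  have huniq : ∀ q : ℕ × (Fin d → ℤ), (IsLeaf k d T q ∧ x ∈ cell k d q.1 q.2) → q = p₀ := by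
    rintro ⟨lq, iq⟩ ⟨hqleaf, hqx⟩
    have h1 : p₀.1 ≤ lq := hle _ hqleaf hqx p₀ hp₀T hp₀x
    have h2 : lq ≤ p₀.1 := hle p₀ hp₀leaf hp₀x _ hqleaf.1 hqx
    have hl : lq = p₀.1 := le_antisymm h2 h1
    have hi : iq = p₀.2 := by rw [hidx lq iq hqx, hl, hidx p₀.1 p₀.2 hp₀x]
    exact Prod.ext hl hi
  refine ⟨⟨p₀, ⟨hp₀leaf, hp₀x⟩, huniq⟩, ?_⟩
  rintro ⟨lp, ip⟩ hpleaf hpx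
  have haT : (ℓstar, a) ∈ T := by rw [ha]; exact hanc ℓ ℓstar i hls hmem
  have h1 : ℓstar ≤ lp := hle _ hpleaf hpx (ℓstar, a) haT hcov
  refine ⟨h1, ?_⟩
  intro j
  have hip : ip = xI lp := hidx lp ip hpx
  have haI : a = xI ℓstar := hidx ℓstar a hcov
  show Int.fdiv (ip j) _ = _
  rw [hip, hfdivx lp ℓstar h1 j, haI]
end

section
/- Dual grid consistency for odd k (one level): suppose k ≥ 3 is odd. Then for every level ℓ and every fine vertex index n : Fin d → ℤ there exists a coarse vertex index m : Fin d → ℤ such that the closed level-(ℓ+1) dual cell D̄_{ℓ+1,n} is contained in the closed level-ℓ dual cell D̄_{ℓ,m}. Consequently, a dual cell of one level either is contained completely within a dual cell of the next coarser level or its interior is disjoint from that coarser dual cell's interior. -/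
/-- Closed dual cell `D̄_{ℓ,m}` of the level-`ℓ` vertex with index `m`. -/
def closedDualCell (k d ℓ : ℕ) (m : Fin d → ℤ) : Set (Fin d → ℝ) :=
  {x | ∀ j, ((m j : ℝ) - 1/2) * meshWidth k ℓ ≤ x j ∧
            x j ≤ ((m j : ℝ) + 1/2) * meshWidth k ℓ}

open Set

lemma meshWidth_nonneg (k ℓ : ℕ) : 0 ≤ meshWidth k ℓ := by
  unfold meshWidth
  positivity

lemma meshWidth_eq_mul_meshWidth_succ {k : ℕ} (hk : k ≠ 0) (ℓ : ℕ) :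
    meshWidth k ℓ = k * meshWidth k (ℓ + 1) := by
  have hk' : (k : ℝ) ≠ 0 := Nat.cast_ne_zero.mpr hk
  simp only [meshWidth, pow_succ]
  field_simp

lemma closedDualCell_eq_pi (k d ℓ : ℕ) (m : Fin d → ℤ) :
    closedDualCell k d ℓ m =
      univ.pi fun j =>
        Icc (((m j : ℝ) - 1/2) * meshWidth k ℓ) (((m j : ℝ) + 1/2) * meshWidth k ℓ) := by
  ext x
  simp only [closedDualCell, mem_ofPred_eq, mem_univ_pi, mem_Icc]

lemma interior_closedDualCell (k d ℓ : ℕ) (m : Fin d → ℤ) :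
    interior (closedDualCell k d ℓ m) =
      univ.pi fun j =>
        Ioo (((m j : ℝ) - 1/2) * meshWidth k ℓ) (((m j : ℝ) + 1/2) * meshWidth k ℓ) := by
  simp only [closedDualCell_eq_pi, interior_pi_set finite_univ, interior_Icc]

lemma disjoint_interior_closedDualCell {k d ℓ : ℕ} {m m' : Fin d → ℤ} (hne : m ≠ m') :
    Disjoint (interior (closedDualCell k d ℓ m)) (interior (closedDualCell k d ℓ m')) := by
  obtain ⟨j, hj⟩ := Function.ne_iff.mp hne
  rw [interior_closedDualCell, interior_closedDualCell, disjoint_univ_pi]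
  refine ⟨j, Ioo_disjoint_Ioo.mpr ?_⟩
  have hh := meshWidth_nonneg k ℓ
  rcases hj.lt_or_gt with hlt | hgt
  · have : (m j : ℝ) + 1 ≤ m' j := by exact_mod_cast hlt
    exact (min_le_left _ _).trans (le_trans (by nlinarith) (le_max_right _ _))
  · have : (m' j : ℝ) + 1 ≤ m j := by exact_mod_cast hgt
    exact (min_le_right _ _).trans (le_trans (by nlinarith) (le_max_left _ _))

lemma closedDualCell_succ_subset {k d : ℕ} {s : ℤ} (hks : (k : ℤ) = 2 * s + 1) (ℓ : ℕ)
    {n m : Fin d → ℤ} (hnm : ∀ j, |n j - k * m j| ≤ s) :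
    closedDualCell k d (ℓ + 1) n ⊆ closedDualCell k d ℓ m := by
  intro x hx j
  have hk : k ≠ 0 := by omega
  have hks' : (k : ℝ) = 2 * s + 1 := by exact_mod_cast hks
  obtain ⟨hlo, hhi⟩ := abs_le.mp (hnm j)
  have hlo' : -(s : ℝ) ≤ n j - k * m j := by exact_mod_cast hlo
  have hhi' : (n j : ℝ) - k * m j ≤ s := by exact_mod_cast hhi
  have hh := meshWidth_nonneg k (ℓ + 1)
  obtain ⟨hxlo, hxhi⟩ := hx j
  rw [meshWidth_eq_mul_meshWidth_succ hk]
  constructor <;>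
    nlinarith [mul_le_mul_of_nonneg_right hlo' hh, mul_le_mul_of_nonneg_right hhi' hh]

/-- The coarse index nearest to `n / k`, for odd `k`. -/
def parentIndex {d : ℕ} (k : ℕ) (n : Fin d → ℤ) : Fin d → ℤ :=
  fun j => (n j + (k / 2 : ℕ)) / k

lemma abs_sub_mul_parentIndex_le {d k : ℕ} (hk : Odd k) (n : Fin d → ℤ) (j : Fin d) :
    |n j - k * parentIndex k n j| ≤ (k / 2 : ℕ) := by
  have hk0 : (0 : ℤ) < k := by exact_mod_cast hk.pos
  have hk2 : (k : ℤ) = 2 * (k / 2 : ℕ) + 1 := by have := Nat.odd_iff.mp hk; omega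
  have hlo := Int.emod_nonneg (n j + (k / 2 : ℕ)) hk0.ne'
  have hhi := Int.emod_lt_of_pos (n j + (k / 2 : ℕ)) hk0
  have hdiv := Int.mul_ediv_add_emod (n j + (k / 2 : ℕ)) k
  rw [parentIndex, abs_le]
  omega

lemma closedDualCell_succ_subset_parentIndex {k d : ℕ} (hk : Odd k) (ℓ : ℕ)
    (n : Fin d → ℤ) :
    closedDualCell k d (ℓ + 1) n ⊆ closedDualCell k d ℓ (parentIndex k n) :=
  closedDualCell_succ_subset (by have := Nat.odd_iff.mp hk; omega) ℓ
    (abs_sub_mul_parentIndex_le hk n)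

theorem dual_grid_consistency_one_level_general (k d : ℕ) (hodd : Odd k) :
    (∀ ℓ : ℕ, ∀ n : Fin d → ℤ, ∃ m : Fin d → ℤ,
      closedDualCell k d (ℓ + 1) n ⊆ closedDualCell k d ℓ m) ∧
    (∀ ℓ : ℕ, ∀ n m : Fin d → ℤ,
      closedDualCell k d (ℓ + 1) n ⊆ closedDualCell k d ℓ m ∨
      interior (closedDualCell k d (ℓ + 1) n) ∩ interior (closedDualCell k d ℓ m) = ∅) := by
  refine ⟨fun ℓ n => ⟨_, closedDualCell_succ_subset_parentIndex hodd ℓ n⟩,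
    fun ℓ n m => ?_⟩
  obtain rfl | hne := eq_or_ne (parentIndex k n) m
  · exact Or.inl (closedDualCell_succ_subset_parentIndex hodd ℓ n)
  · refine Or.inr (disjoint_iff_inter_eq_empty.mp ?_)
    exact (disjoint_interior_closedDualCell hne).mono_left
      (interior_mono (closedDualCell_succ_subset_parentIndex hodd ℓ n))

/-- Dual grid consistency for odd `k` (one level): every closed level-`(ℓ+1)`
dual cell is contained in some closed level-`ℓ` dual cell; consequently a dual
cell of one level either is contained completely within a dual cell of the
next coarser level or the two cells' interiors are disjoint. -/
theorem dual_grid_consistency_one_level (k d : ℕ) (hk : 3 ≤ k) (hodd : Odd k)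
    (hd : 1 ≤ d) :
    (∀ ℓ : ℕ, ∀ n : Fin d → ℤ, ∃ m : Fin d → ℤ,
      closedDualCell k d (ℓ + 1) n ⊆ closedDualCell k d ℓ m) ∧
    (∀ ℓ : ℕ, ∀ n m : Fin d → ℤ,
      closedDualCell k d (ℓ + 1) n ⊆ closedDualCell k d ℓ m ∨
      interior (closedDualCell k d (ℓ + 1) n) ∩ interior (closedDualCell k d ℓ m) = ∅) :=
  dual_grid_consistency_one_level_general k d hodd
end

section
/- Dual grid consistency for odd k (multiscale): suppose k ≥ 3 is odd. Then for all levels ℓ ≤ ℓ' and every level-ℓ' vertex index n : Fin d → ℤ there exists a level-ℓ vertex index m : Fin d → ℤ such that the closed level-ℓ' dual cell D̄_{ℓ',n} is contained in the closed level-ℓ dual cell D̄_{ℓ,m}. -/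
/-- Dual grid consistency for odd `k` (multiscale): for all levels `ℓ ≤ ℓ'`
and every level-`ℓ'` vertex index `n` there is a level-`ℓ` vertex index `m`
with `D̄_{ℓ',n} ⊆ D̄_{ℓ,m}`. -/
theorem dual_grid_consistency_multiscale (k d : ℕ) (hk : 3 ≤ k) (hodd : Odd k)
    (hd : 1 ≤ d) (ℓ ℓ' : ℕ) (hle : ℓ ≤ ℓ') (n : Fin d → ℤ) :
    ∃ m : Fin d → ℤ, closedDualCell k d ℓ' n ⊆ closedDualCell k d ℓ m := by
  set K : ℤ := (k : ℤ) ^ (ℓ' - ℓ) with hKdef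
  have hk0 : (0 : ℤ) < (k : ℤ) := by exact_mod_cast Nat.lt_of_lt_of_le (by norm_num) hk
  have hK0 : (0 : ℤ) < K := pow_pos hk0 _
  obtain ⟨t, ht⟩ : Odd K := ((Int.odd_coe_nat k).mpr hodd).pow
  refine ⟨fun j => (n j + t) / K, ?_⟩
  intro x hx j
  have hdiv : K * ((n j + t) / K) + (n j + t) % K = n j + t := Int.mul_ediv_add_emod _ _
  have hr0 : 0 ≤ (n j + t) % K := Int.emod_nonneg _ (ne_of_gt hK0)
  have hr1 : (n j + t) % K < K := Int.emod_lt_of_pos _ hK0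
  set q : ℤ := (n j + t) / K
  have e1 : 2 * (K * q) ≤ 2 * n j + K - 1 := by linarith
  have e2 : 2 * n j + 1 ≤ 2 * (K * q) + K := by linarith
  have hmesh : meshWidth k ℓ = (K : ℝ) * meshWidth k ℓ' := by
    have hkR : (0 : ℝ) < (k : ℝ) := by exact_mod_cast hk0
    have : (k : ℝ) ^ ℓ' = (k : ℝ) ^ ℓ * (k : ℝ) ^ (ℓ' - ℓ) := by
      rw [← pow_add]; congr 1; omega
    simp only [meshWidth, hKdef]
    push_cast
    rw [this]
    field_simp
  have h'pos : (0 : ℝ) < meshWidth k ℓ' := by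
    have hkR : (0 : ℝ) < (k : ℝ) := by exact_mod_cast hk0
    exact inv_pos.mpr (pow_pos hkR _)
  obtain ⟨hx1, hx2⟩ := hx j
  have e1R : 2 * ((K : ℝ) * q) ≤ 2 * (n j : ℝ) + (K : ℝ) - 1 := by exact_mod_cast e1
  have e2R : 2 * (n j : ℝ) + 1 ≤ 2 * ((K : ℝ) * q) + (K : ℝ) := by exact_mod_cast e2
  rw [hmesh]
  constructor
  · nlinarith [mul_le_mul_of_nonneg_right (by linarith : (2 : ℝ) * ((K : ℝ) * q) - K ≤ 2 * (n j : ℝ) - 1) h'pos.le]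
  · nlinarith [mul_le_mul_of_nonneg_right (by linarith : (2 : ℝ) * (n j : ℝ) + 1 ≤ 2 * ((K : ℝ) * q) + K) h'pos.le]
end

section
/- Parent-vertex cardinality: let n : Fin d → ℤ be a level-(ℓ+1) vertex index with 0 < n_j < k^{ℓ+1} for all j. Call a level-ℓ vertex index m a parent of n if for every admissible level-(ℓ+1) cell index i whose closed cell contains the point (n_j·h_{ℓ+1})_j, the closed cell of the parent index (j ↦ ⌊i_j/k⌋) at level ℓ contains the point (m_j·h_ℓ)_j. Then the number of parents of n equals 2^{#{j : k ∤ n_j}}. In particular a vertex coinciding with a coarse vertex has exactly one parent, a vertex interior to a coarse cell has exactly 2^d parents, and vertices on coarse faces and edges have a parent cardinality in between. -/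
/-- Closed level-`ℓ` cell `C̄_{ℓ,i}`. -/
def closedCell (k d ℓ : ℕ) (i : Fin d → ℤ) : Set (Fin d → ℝ) :=
  {x | ∀ j, (i j : ℝ) * meshWidth k ℓ ≤ x j ∧ x j ≤ ((i j : ℝ) + 1) * meshWidth k ℓ}

/-- The level-`ℓ` vertex point with index `m`. -/
noncomputable def vertexPoint (k d ℓ : ℕ) (m : Fin d → ℤ) : Fin d → ℝ :=
  fun j => (m j : ℝ) * meshWidth k ℓ

/-!
A level-`(ℓ+1)` vertex `n` lies exactly in the cells `i` with `i_j ∈ {n_j - 1, n_j}`, all of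
them admissible when `0 < n_j < k^(ℓ+1)`. Since `⌊·/k⌋` is monotone, the parent condition only
has to be checked on the extreme cells `n - 1` and `n`, so the parents of `n` form the box
`∏_j [⌊n_j/k⌋, ⌊(n_j-1)/k⌋ + 1]`. The `j`-th side has two points, except when `k ∣ n_j`,
where `⌊(n_j-1)/k⌋ = ⌊n_j/k⌋ - 1` collapses it to one.
-/

theorem Int.sub_one_ediv (a : ℤ) {k : ℤ} (hk : 0 < k) :
    (a - 1) / k = if k ∣ a then a / k - 1 else a / k := by
  have hdiv := Int.emod_add_mul_ediv a k
  have hmod_nonneg := Int.emod_nonneg a hk.ne'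
  have hmod_lt := Int.emod_lt_of_pos a hk
  by_cases h : k ∣ a
  · rw [if_pos h]
    have h0 := Int.emod_eq_zero_of_dvd h
    refine le_antisymm ((Int.ediv_le_iff_le_mul hk).2 ?_) ((Int.le_ediv_iff_mul_le hk).2 ?_)
    · linarith
    · linarith
  · rw [if_neg h]
    have hpos : 0 < a % k := lt_of_le_of_ne hmod_nonneg (Ne.symm (mt Int.dvd_of_emod_eq_zero h))
    refine le_antisymm ((Int.ediv_le_iff_le_mul hk).2 ?_) ((Int.le_ediv_iff_mul_le hk).2 ?_)
    · linarith
    · linarith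

theorem Int.card_Icc_ediv_sub_one_ediv (a : ℤ) {k : ℤ} (hk : 0 < k) :
    (Finset.Icc (a / k) ((a - 1) / k + 1)).card = if k ∣ a then 1 else 2 := by
  rw [Int.card_Icc, Int.sub_one_ediv a hk]
  split_ifs <;> omega

theorem parentIdx_apply (k d : ℕ) (i : Fin d → ℤ) (j : Fin d) :
    parentIdx k d i j = i j / k :=
  Int.fdiv_eq_ediv_of_nonneg _ (Int.natCast_nonneg k)

theorem vertexPoint_mem_closedCell_iff {k : ℕ} (hk : 0 < k) (d ℓ : ℕ) (i m : Fin d → ℤ) :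
    vertexPoint k d ℓ m ∈ closedCell k d ℓ i ↔ ∀ j, i j ≤ m j ∧ m j ≤ i j + 1 := by
  have hh : 0 < meshWidth k ℓ := by unfold meshWidth; positivity
  simp only [vertexPoint, closedCell, Set.mem_ofPred_eq, mul_le_mul_iff_of_pos_right hh]
  exact_mod_cast Iff.rfl

def parentVertices (k d ℓ : ℕ) (n : Fin d → ℤ) : Set (Fin d → ℤ) :=
  {m | ∀ i : Fin d → ℤ, admissible k d (ℓ + 1) i →
    vertexPoint k d (ℓ + 1) n ∈ closedCell k d (ℓ + 1) i →
    vertexPoint k d ℓ m ∈ closedCell k d ℓ (parentIdx k d i)}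

theorem parentVertices_eq_pi {k : ℕ} (hk : 0 < k) (d ℓ : ℕ) (n : Fin d → ℤ)
    (hn : ∀ j, 0 < n j ∧ n j < (k : ℤ) ^ (ℓ + 1)) :
    parentVertices k d ℓ n = Set.univ.pi fun j => Set.Icc (n j / k) ((n j - 1) / k + 1) := by
  have hk' : (0 : ℤ) < k := by exact_mod_cast hk
  ext m
  simp only [parentVertices, Set.mem_ofPred_eq, Set.mem_univ_pi, Set.mem_Icc,
    vertexPoint_mem_closedCell_iff hk, parentIdx_apply]
  constructor
  · intro hm j
    have hcell_n := hm n (fun j => ⟨(hn j).1.le, (hn j).2⟩) (fun j => ⟨le_rfl, by omega⟩)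
    have hcell_pred := hm (n - 1) (fun j => by have := hn j; constructor <;> simp <;> omega)
      (fun j => by simp)
    exact ⟨(hcell_n j).1, by simpa using (hcell_pred j).2⟩
  · intro hm i _ hi j
    have hpred : n j - 1 ≤ i j := by linarith [(hi j).2]
    exact ⟨(Int.ediv_le_ediv hk' (hi j).1).trans (hm j).1,
      (hm j).2.trans (by simpa using Int.ediv_le_ediv hk' hpred)⟩

theorem parent_vertex_card_general (k d : ℕ) (hk : 2 ≤ k) (ℓ : ℕ)
    (n : Fin d → ℤ) (hn : ∀ j, 0 < n j ∧ n j < (k : ℤ) ^ (ℓ + 1)) :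
    Set.ncard {m : Fin d → ℤ |
        ∀ i : Fin d → ℤ, admissible k d (ℓ + 1) i →
          vertexPoint k d (ℓ + 1) n ∈ closedCell k d (ℓ + 1) i →
          vertexPoint k d ℓ m ∈ closedCell k d ℓ (parentIdx k d i)}
      = 2 ^ Set.ncard {j : Fin d | ¬ (k : ℤ) ∣ n j} := by
  classical
  have hk' : 0 < k := by omega
  change (parentVertices k d ℓ n).ncard = _
  rw [parentVertices_eq_pi hk' d ℓ n hn]
  simp_rw [← Finset.coe_Icc, ← Fintype.coe_piFinset]
  rw [Set.ncard_coe_finset, Fintype.card_piFinset, Set.ncard_eq_toFinset_card',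
    Set.toFinset_ofPred]
  simp_rw [Int.card_Icc_ediv_sub_one_ediv _ (Int.natCast_pos.2 hk')]
  rw [Finset.prod_ite, Finset.prod_const_one, Finset.prod_const, one_mul]

/-- Parent-vertex cardinality: for an interior level-`(ℓ+1)` vertex index `n`,
the number of level-`ℓ` vertex indices `m` that are parents of `n` (i.e. every
admissible level-`(ℓ+1)` cell adjacent to `n` has its parent cell adjacent to `m`)
equals `2^{#{j : k ∤ n_j}}`. -/
theorem parent_vertex_card (k d : ℕ) (hk : 2 ≤ k) (hd : 1 ≤ d) (ℓ : ℕ)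
    (n : Fin d → ℤ) (hn : ∀ j, 0 < n j ∧ n j < (k : ℤ) ^ (ℓ + 1)) :
    Set.ncard {m : Fin d → ℤ |
        ∀ i : Fin d → ℤ, admissible k d (ℓ + 1) i →
          vertexPoint k d (ℓ + 1) n ∈ closedCell k d (ℓ + 1) i →
          vertexPoint k d ℓ m ∈ closedCell k d ℓ (parentIdx k d i)}
      = 2 ^ Set.ncard {j : Fin d | ¬ (k : ℤ) ∣ n j} :=
  parent_vertex_card_general k d hk ℓ n hn
end
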